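/- There is no infinite squarefree word x (over any alphabet) with inrc_x(n) < 2n for all n ≥ 1, and there is no infinite cubefree word x with inrc_x(n) < (3/2)n for all n ≥ 1. -/
import Mathlib


/-- The set of `m` such that the first `m` length-`n` factors of `x`
are pairwise distinct; `inrc x n` is its greatest element. -/
def inrcSet {α : Type*} (x : ℕ → α) (n : ℕ) : Set ℕ :=
  {m | ∀ i < m, ∀ j < m, (∀ d < n, x (i + d) = x (j + d)) → i = j}

/-- An infinite word is squarefree if no factor has the form uu, u nonempty. -/
def IsSquarefree' {α : Type*} (x : ℕ → α) : Prop :=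
  ¬ ∃ (i l : ℕ), 0 < l ∧ ∀ d < l, x (i + d) = x (i + l + d)

/-- An infinite word is cubefree if no factor has the form uuu, u nonempty. -/
def IsCubefree' {α : Type*} (x : ℕ → α) : Prop :=
  ¬ ∃ (i l : ℕ), 0 < l ∧ ∀ d < 2 * l, x (i + d) = x (i + l + d)

lemma two_mem_inrcSet_one {α : Type*} (x : ℕ → α) (h : x 0 ≠ x 1) :
    (2 : ℕ) ∈ inrcSet x 1 := by
  intro i hi j hj hm
  have := hm 0 (by norm_num)
  interval_cases i <;> interval_cases j <;> simp_all

/-- no infinite squarefree word has inrc_x(n) < 2n for all n ≥ 1,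
and no infinite cubefree word has inrc_x(n) < (3/2)n for all n ≥ 1. -/
theorem no_squarefree_small_inrc :
    (∀ (α : Type) (x : ℕ → α), IsSquarefree' x →
      ¬ (∀ n ≥ 1, ∀ m ∈ inrcSet x n, m < 2 * n)) ∧
    (∀ (α : Type) (x : ℕ → α), IsCubefree' x →
      ¬ (∀ n ≥ 1, ∀ m ∈ inrcSet x n, 2 * m < 3 * n)) := by
  constructor
  · intro α x hsf H
    have h01 : x 0 ≠ x 1 := by
      intro h
      exact hsf ⟨0, 1, one_pos, by intro d hd; interval_cases d; simpa using h⟩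
    have := H 1 le_rfl 2 (two_mem_inrcSet_one x h01)
    omega
  · intro α x hcf H
    have h01 : x 0 = x 1 := by
      by_contra h
      have := H 1 le_rfl 2 (two_mem_inrcSet_one x h)
      omega
    have h12 : x 1 ≠ x 2 := by
      intro h
      refine hcf ⟨0, 1, one_pos, ?_⟩
      intro d hd
      interval_cases d <;> simpa using by first | exact h01 | exact h
    have h3 : (3 : ℕ) ∈ inrcSet x 2 := by
      intro i hi j hj hm
      have h0 := hm 0 (by norm_num)
      have h1 := hm 1 (by norm_num)
      interval_cases i <;> interval_cases j <;> simp_all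
    have := H 2 (by norm_num) 3 h3
    omega
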